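/- arXiv:1907.12150 — 5 statements merged into one kernel-verified Lean document; each statement's English description precedes it below -/
import Mathlib

section
/- Let φ_U, φ_Z, ρ, τ_Z be real numbers with τ_Z > 0, |φ_U| < 1 and |φ_Z| < 1. For each n ≥ 3 let M_n = τ_Z · (A_n(φ_Z) − 4ρ² · A_n(φ_U)⁻¹). Then for every fixed pair of natural-number indices i, j, the sequence n ↦ (M_n)_{ij} (defined for all n > max(i,j)) converges, as n → ∞, to: τ_Z·[2 − 2ρ²/√(1−φ_U²)] if i = j; τ_Z·[−φ_Z − 2ρ²·φ_U/(√(1−φ_U²)·(1+√(1−φ_U²)))] if |i−j| = 1; and τ_Z·[−2ρ²·φ_U^{|i−j|}/(√(1−φ_U²)·(1+√(1−φ_U²))^{|i−j|})] if |i−j| > 1. -/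
/-!
`A_n(φ)` is the circulant matrix with stencil `2, -φ, -φ`. Let `r ∈ (-1, 1)` be the root of
`φ r² - 2 r + φ = 0`. The kernel `g(m) = r^m + r^(n-m)` satisfies `g(n - m) = g(m)` and the
homogeneous recurrence `2 g(m) = φ (g(m - 1) + g(m + 1))` for `0 < m < n`, while at `m = 0`
the defect is `2 √(1 - φ²) (1 - r^n)`. Hence the circulant matrix of
`g(m) / (2 √(1 - φ²) (1 - r^n))` is `A_n(φ)⁻¹`, and its `(i, j)` entry tends to
`r^|i-j| / (2 √(1 - φ²))` as `n → ∞`, with `r = φ / (1 + √(1 - φ²))`.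
-/

open Matrix Filter Topology

/-- The unscaled conditional autoregressive (CAR) precision matrix of the ring graph on
`n` vertices: entries are `2` on the diagonal, `-φ` at positions with `|i - j| = 1` or
`|i - j| = n - 1`, and `0` otherwise. -/
noncomputable def ringA (n : ℕ) (φ : ℝ) : Matrix (Fin n) (Fin n) ℝ :=
  Matrix.of fun i j =>
    if i = j then 2
    else if Nat.dist i.val j.val = 1 ∨ Nat.dist i.val j.val = n - 1 then -φ
    else 0

section carRoot

variable {φ : ℝ}

noncomputable def carRoot (φ : ℝ) : ℝ := φ / (1 + √(1 - φ ^ 2))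

lemma sqrt_one_sub_sq_pos (hφ : |φ| < 1) : 0 < √(1 - φ ^ 2) :=
  Real.sqrt_pos.2 (by nlinarith [sq_abs φ, abs_nonneg φ])

lemma sq_sqrt_one_sub_sq (hφ : |φ| < 1) : √(1 - φ ^ 2) ^ 2 = 1 - φ ^ 2 :=
  Real.sq_sqrt (by nlinarith [sq_abs φ, abs_nonneg φ])

lemma abs_carRoot_lt_one (hφ : |φ| < 1) : |carRoot φ| < 1 := by
  have hs := sqrt_one_sub_sq_pos hφ
  have h1s : 0 < 1 + √(1 - φ ^ 2) := by positivity
  rw [carRoot, abs_div, abs_of_pos h1s, div_lt_one h1s]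
  linarith

lemma carRoot_pow_lt_one (hφ : |φ| < 1) {n : ℕ} (hn : n ≠ 0) : carRoot φ ^ n < 1 := by
  have h : |carRoot φ ^ n| < 1 := by
    rw [abs_pow]
    exact pow_lt_one₀ (abs_nonneg _) (abs_carRoot_lt_one hφ) hn
  exact (abs_lt.1 h).2

lemma carRoot_quadratic (hφ : |φ| < 1) : φ * (1 + carRoot φ ^ 2) = 2 * carRoot φ := by
  have hs := sqrt_one_sub_sq_pos hφ
  have hs2 := sq_sqrt_one_sub_sq hφ
  rw [carRoot]
  field_simp
  linear_combination φ * hs2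

lemma one_sub_mul_carRoot (hφ : |φ| < 1) : 1 - φ * carRoot φ = √(1 - φ ^ 2) := by
  have hs := sqrt_one_sub_sq_pos hφ
  have hs2 := sq_sqrt_one_sub_sq hφ
  rw [carRoot]
  field_simp
  linear_combination -hs2

end carRoot

section ringKernel

variable {n m : ℕ} {r φ : ℝ}

def ringKernel (n : ℕ) (r : ℝ) (m : ℕ) : ℝ := r ^ m + r ^ (n - m)

lemma ringKernel_sub_self (hm : m ≤ n) : ringKernel n r (n - m) = ringKernel n r m := by
  rw [ringKernel, ringKernel, Nat.sub_sub_self hm, add_comm]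

lemma ringKernel_zero : ringKernel n r 0 = ringKernel n r n := by
  simpa using ringKernel_sub_self (n := n) (r := r) le_rfl

lemma ringKernel_recurrence (h : φ * (1 + r ^ 2) = 2 * r) (hm : m + 2 ≤ n) :
    φ * (ringKernel n r m + ringKernel n r (m + 2)) = 2 * ringKernel n r (m + 1) := by
  obtain ⟨k, rfl⟩ := Nat.exists_eq_add_of_le hm
  simp only [ringKernel, show m + 2 + k - m = k + 2 by omega,
    show m + 2 + k - (m + 2) = k by omega, show m + 2 + k - (m + 1) = k + 1 by omega]
  linear_combination (r ^ m + r ^ k) * h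

lemma ringKernel_boundary (h : φ * (1 + r ^ 2) = 2 * r) (hn : 1 ≤ n) :
    2 * ringKernel n r 0 - 2 * φ * ringKernel n r 1 = 2 * (1 - φ * r) * (1 - r ^ n) := by
  obtain ⟨k, rfl⟩ := Nat.exists_eq_add_of_le hn
  simp only [ringKernel, show 1 + k - 1 = k by omega, Nat.sub_zero]
  linear_combination (-2 * r ^ k) * h

lemma Fin.val_sub_eq_dist_or (a b : Fin n) :
    ((a - b : Fin n) : ℕ) = Nat.dist a b ∨ ((a - b : Fin n) : ℕ) = n - Nat.dist a b := by
  rcases le_or_gt b a with h | h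
  · exact .inl ((Fin.sub_val_of_le h).trans (by simp only [Nat.dist]; omega))
  · exact .inr ((Fin.coe_sub_iff_lt.2 h).trans (by simp only [Nat.dist]; omega))

lemma ringKernel_val_sub (a b : Fin n) :
    ringKernel n r ((a - b : Fin n) : ℕ) = ringKernel n r (Nat.dist a b) := by
  rcases Fin.val_sub_eq_dist_or a b with h | h
  · rw [h]
  · rw [h, ringKernel_sub_self]
    simp only [Nat.dist]
    omega

lemma ringKernel_val_add_one [NeZero n] (k : Fin n) :
    ringKernel n r ((k + 1 : Fin n) : ℕ) = ringKernel n r (k + 1) := by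
  obtain ⟨m, rfl⟩ := Nat.exists_eq_succ_of_ne_zero (NeZero.ne n)
  rw [Fin.val_add_one]
  split_ifs with h
  · rw [h, Fin.val_last, ringKernel_zero]
  · rfl

end ringKernel

section ringMatrix

variable {n : ℕ} [NeZero n] {φ : ℝ}

noncomputable def ringAVec (n : ℕ) [NeZero n] (φ : ℝ) : Fin n → ℝ :=
  Pi.single 0 2 - Pi.single 1 φ - Pi.single (-1) φ

lemma ringA_eq_circulant (hn : 3 ≤ n) (φ : ℝ) : ringA n φ = circulant (ringAVec n φ) := by
  obtain ⟨m, rfl⟩ : ∃ m, n = m + 3 := ⟨n - 3, by omega⟩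
  ext i j
  have hsub := Fin.val_sub_eq_dist_or i j
  have := i.isLt
  have := j.isLt
  simp only [ringA, ringAVec, of_apply, circulant_apply, Pi.sub_apply, Pi.single_apply,
    Fin.ext_iff, Fin.val_one, Fin.coe_neg_one, Fin.val_zero, Nat.dist,
    show m + 3 - 1 = m + 2 by omega] at hsub ⊢
  split_ifs <;> first | ring1 | omega

lemma circulant_mulVec_ringAVec (w : Fin n → ℝ) (k : Fin n) :
    (circulant w *ᵥ ringAVec n φ) k = 2 * w k - φ * (w (k - 1) + w (k + 1)) := by
  simp only [ringAVec, mulVec_sub, mulVec_single, Pi.sub_apply, Pi.smul_apply, col_apply,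
    circulant_apply, sub_zero, sub_neg_eq_add, MulOpposite.smul_eq_mul_unop,
    MulOpposite.unop_op]
  ring

noncomputable def ringGreen (n : ℕ) (φ : ℝ) (k : Fin n) : ℝ :=
  ringKernel n (carRoot φ) k / (2 * √(1 - φ ^ 2) * (1 - carRoot φ ^ n))

lemma circulant_ringGreen_mulVec_ringAVec (hφ : |φ| < 1) (hn : 3 ≤ n) :
    circulant (ringGreen n φ) *ᵥ ringAVec n φ = Pi.single 0 1 := by
  funext k
  have hD : 2 * √(1 - φ ^ 2) * (1 - carRoot φ ^ n) ≠ 0 := by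
    have := sqrt_one_sub_sq_pos hφ
    have := carRoot_pow_lt_one hφ (NeZero.ne n)
    have : 0 < 1 - carRoot φ ^ n := by linarith
    positivity
  have hone : ((1 : Fin n) : ℕ) = 1 := (Fin.val_one' n).trans (Nat.mod_eq_of_lt (by omega))
  rw [circulant_mulVec_ringAVec, ringGreen, ringGreen, ringGreen, ringKernel_val_add_one,
    ringKernel_val_sub, hone, ← add_div, ← mul_div_assoc, ← mul_div_assoc, ← sub_div,
    div_eq_iff hD]
  by_cases hk : k = 0
  · subst hk
    rw [Pi.single_eq_same, one_mul, ← one_sub_mul_carRoot hφ,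
      ← ringKernel_boundary (carRoot_quadratic hφ) (by omega)]
    simp only [Fin.val_zero, zero_add, Nat.dist_comm 0, Nat.dist_zero_right]
    ring
  · obtain ⟨p, hp⟩ := Nat.exists_eq_succ_of_ne_zero (Fin.val_ne_zero_iff.2 hk)
    have hrec := ringKernel_recurrence (n := n) (m := p) (carRoot_quadratic hφ) (by omega)
    rw [Pi.single_eq_of_ne hk, zero_mul, hp, show Nat.dist (p + 1) 1 = p by simp [Nat.dist]]
    linear_combination -hrec

lemma ringA_inv (hφ : |φ| < 1) (hn : 3 ≤ n) : (ringA n φ)⁻¹ = circulant (ringGreen n φ) := by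
  refine inv_eq_left_inv ?_
  rw [ringA_eq_circulant hn, circulant_mul, circulant_ringGreen_mulVec_ringAVec hφ hn,
    circulant_single_one]

end ringMatrix

lemma ringA_inv_apply {n : ℕ} {φ : ℝ} (hφ : |φ| < 1) (hn : 3 ≤ n) (i j : Fin n) :
    (ringA n φ)⁻¹ i j = ringKernel n (carRoot φ) (Nat.dist i j) /
      (2 * √(1 - φ ^ 2) * (1 - carRoot φ ^ n)) := by
  have : NeZero n := ⟨by omega⟩
  rw [ringA_inv hφ hn, circulant_apply, ringGreen, ringKernel_val_sub]

def entrySeq (M : (n : ℕ) → Matrix (Fin n) (Fin n) ℝ) (i j n : ℕ) : ℝ :=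
  if h : i < n ∧ j < n then M n ⟨i, h.1⟩ ⟨j, h.2⟩ else 0

section entrySeq

variable (M N : (n : ℕ) → Matrix (Fin n) (Fin n) ℝ) (i j : ℕ)

lemma entrySeq_sub :
    entrySeq (fun n => M n - N n) i j = fun n => entrySeq M i j n - entrySeq N i j n := by
  funext n
  unfold entrySeq
  split_ifs <;> simp

lemma entrySeq_smul (c : ℝ) :
    entrySeq (fun n => c • M n) i j = fun n => c * entrySeq M i j n := by
  funext n
  unfold entrySeq
  split_ifs <;> simp

lemma entrySeq_of_lt {n : ℕ} (hi : i < n) (hj : j < n) :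
    entrySeq M i j n = M n ⟨i, hi⟩ ⟨j, hj⟩ :=
  dif_pos ⟨hi, hj⟩

end entrySeq

lemma tendsto_entrySeq_ringA (φ : ℝ) (i j : ℕ) :
    Tendsto (entrySeq (ringA · φ) i j) atTop
      (𝓝 (if i = j then 2 else if Nat.dist i j = 1 then -φ else 0)) := by
  refine tendsto_const_nhds.congr' ?_
  filter_upwards [eventually_gt_atTop (i + j + 1)] with n hn
  have hd : Nat.dist i j ≠ n - 1 := by
    unfold Nat.dist
    omega
  rw [entrySeq_of_lt _ _ _ (by omega) (by omega)]
  simp only [ringA, of_apply, Fin.mk.injEq, hd, or_false]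

lemma tendsto_entrySeq_ringA_inv {φ : ℝ} (hφ : |φ| < 1) (i j : ℕ) :
    Tendsto (entrySeq (fun n => (ringA n φ)⁻¹) i j) atTop
      (𝓝 (carRoot φ ^ Nat.dist i j / (2 * √(1 - φ ^ 2)))) := by
  set r := carRoot φ
  set d := Nat.dist i j
  have hr : Tendsto (fun n : ℕ => r ^ n) atTop (𝓝 0) :=
    tendsto_pow_atTop_nhds_zero_of_abs_lt_one (abs_carRoot_lt_one hφ)
  have hlim : Tendsto (fun n : ℕ => (r ^ d + r ^ (n - d)) / (2 * √(1 - φ ^ 2) * (1 - r ^ n)))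
      atTop (𝓝 ((r ^ d + 0) / (2 * √(1 - φ ^ 2) * (1 - 0)))) :=
    (tendsto_const_nhds.add (hr.comp (tendsto_sub_atTop_nat d))).div
      ((tendsto_const_nhds.sub hr).const_mul _) (by simp [(sqrt_one_sub_sq_pos hφ).ne'])
  rw [add_zero, sub_zero, mul_one] at hlim
  refine hlim.congr' ?_
  filter_upwards [eventually_ge_atTop (i + j + 3)] with n hn
  rw [entrySeq_of_lt _ _ _ (by omega) (by omega), ringA_inv_apply hφ (by omega)]
  rfl

theorem limiting_marginal_precision_entries_general
    (φU φZ ρ τZ : ℝ) (hφU : |φU| < 1) (i j : ℕ) :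
    Tendsto
      (fun n : ℕ =>
        if h : i < n ∧ j < n then
          (τZ • (ringA n φZ - (4 * ρ ^ 2) • (ringA n φU)⁻¹)) ⟨i, h.1⟩ ⟨j, h.2⟩
        else 0)
      atTop
      (𝓝 (if i = j then
            τZ * (2 - 2 * ρ ^ 2 / Real.sqrt (1 - φU ^ 2))
          else if Nat.dist i j = 1 then
            τZ * (-φZ - 2 * ρ ^ 2 * φU /
              (Real.sqrt (1 - φU ^ 2) * (1 + Real.sqrt (1 - φU ^ 2))))
          else
            τZ * (0 - 2 * ρ ^ 2 * φU ^ Nat.dist i j /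
              (Real.sqrt (1 - φU ^ 2) * (1 + Real.sqrt (1 - φU ^ 2)) ^ Nat.dist i j)))) := by
  have hM := ((tendsto_entrySeq_ringA φZ i j).sub
    ((tendsto_entrySeq_ringA_inv hφU i j).const_mul (4 * ρ ^ 2))).const_mul τZ
  change Tendsto (entrySeq (fun n => τZ • (ringA n φZ - (4 * ρ ^ 2) • (ringA n φU)⁻¹)) i j) _ _
  rw [entrySeq_smul, entrySeq_sub, entrySeq_smul]
  convert hM using 2
  have hs := sqrt_one_sub_sq_pos hφU
  rw [carRoot, div_pow]
  split_ifs with hij hd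
  · subst hij
    simp only [Nat.dist_self, pow_zero]
    field_simp
    ring
  · rw [hd]
    field_simp
    ring
  · field_simp
    ring

/-- Limiting entrywise formula for the marginal precision matrix
`M_n = τ_Z • (A_n(φ_Z) - 4ρ² • A_n(φ_U)⁻¹)` of the exposure on the ring graph. -/
theorem limiting_marginal_precision_entries
    (φU φZ ρ τZ : ℝ) (hτZ : 0 < τZ) (hφU : |φU| < 1) (hφZ : |φZ| < 1) (i j : ℕ) :
    Tendsto
      (fun n : ℕ =>
        if h : i < n ∧ j < n then
          (τZ • (ringA n φZ - (4 * ρ ^ 2) • (ringA n φU)⁻¹)) ⟨i, h.1⟩ ⟨j, h.2⟩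
        else 0)
      atTop
      (𝓝 (if i = j then
            τZ * (2 - 2 * ρ ^ 2 / Real.sqrt (1 - φU ^ 2))
          else if Nat.dist i j = 1 then
            τZ * (-φZ - 2 * ρ ^ 2 * φU /
              (Real.sqrt (1 - φU ^ 2) * (1 + Real.sqrt (1 - φU ^ 2))))
          else
            τZ * (0 - 2 * ρ ^ 2 * φU ^ Nat.dist i j /
              (Real.sqrt (1 - φU ^ 2) * (1 + Real.sqrt (1 - φU ^ 2)) ^ Nat.dist i j)))) :=
  limiting_marginal_precision_entries_general φU φZ ρ τZ hφU i j
end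

section
/- Let φ be a real number and n ≥ 3 an integer. Then det[A_n(φ)] = 2·det[S_{n−1}(2, −φ)] − 2φ²·(det[S_{n−2}(2, −φ)] + φ^{n−2}). -/
/-!
Write `T = S_n(2, -φ)`. The ring matrix `A_n(φ)` differs from `T` only by the two corner entries
`-φ`, so expanding `det A_n(φ)` multilinearly in the first and the last row gives `det T`, two
terms in which one of these rows is a unit vector, and one in which both are. The cofactors of
the single corners are triangular minors of `T` with diagonal `-φ`, each contributing `φ ^ (n - 1)`,
and the doubly replaced matrix reduces to the interior block `S_{n-2}(2, -φ)`. The three-term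
recurrence of tridiagonal determinants, applied to `det T`, then gives the formula.
-/

open Matrix

/-- The `n × n` symmetric tridiagonal matrix with constant diagonal `a` and constant
sub- and superdiagonal `b`; `S_0(a,b)` is the empty matrix (with determinant `1`). -/
noncomputable def tridiagS (n : ℕ) (a b : ℝ) : Matrix (Fin n) (Fin n) ℝ :=
  Matrix.of fun i j =>
    if i = j then a
    else if Nat.dist i.val j.val = 1 then b
    else 0

namespace Matrix

variable {R : Type*} [CommRing R]

theorem det_updateRow_single_one {n : ℕ} (M : Matrix (Fin (n + 1)) (Fin (n + 1)) R)
    (i j : Fin (n + 1)) :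
    (M.updateRow i (Pi.single j 1)).det =
      (-1) ^ (i + j : ℕ) * (M.submatrix i.succAbove j.succAbove).det := by
  rw [← adjugate_apply, adjugate_fin_succ_eq_det_submatrix]

theorem det_updateRow_add_smul_updateRow_add_smul {ι : Type*} [Fintype ι] [DecidableEq ι]
    (M : Matrix ι ι R) {i i' : ι} (h : i ≠ i') (c c' : R) (u u' : ι → R) :
    ((M.updateRow i' (M i' + c' • u')).updateRow i (M i + c • u)).det =
      M.det + c * (M.updateRow i u).det + c' * (M.updateRow i' u').det +
        c * c' * ((M.updateRow i u).updateRow i' u').det := by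
  have expand_row (N : Matrix ι ι R) (r : ι) (v : ι → R) (d : R) (hN : N r = M r) :
      (N.updateRow r (M r + d • v)).det = N.det + d * (N.updateRow r v).det := by
    rw [det_updateRow_add, det_updateRow_smul, ← hN, updateRow_eq_self]
  rw [expand_row _ i u c (updateRow_ne h), expand_row M i' u' c' rfl,
    updateRow_comm M h.symm (M i' + c' • u') u, expand_row _ i' u' c' (updateRow_ne h.symm)]
  ring

end Matrix

section tridiagS

variable (a b : ℝ)

theorem tridiagS_submatrix_of_val_eq_add {m n : ℕ} (f g : Fin m → Fin n) (c : ℕ)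
    (hf : ∀ i, (f i : ℕ) = i + c) (hg : ∀ j, (g j : ℕ) = j + c) :
    (tridiagS n a b).submatrix f g = tridiagS m a b := by
  ext i j
  simp [tridiagS, Fin.ext_iff, hf, hg, Nat.dist_add_add_right]

theorem det_tridiagS_succ_succ (k : ℕ) :
    (tridiagS (k + 2) a b).det = a * (tridiagS (k + 1) a b).det - b ^ 2 * (tridiagS k a b).det := by
  have minor : ((tridiagS (k + 2) a b).submatrix Fin.succ (Fin.succAbove 1)).det =
      b * (tridiagS k a b).det := by
    rw [det_succ_column_zero, Fin.sum_univ_succ, Fin.succAbove_zero, submatrix_submatrix,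
      tridiagS_submatrix_of_val_eq_add a b (Fin.succ ∘ Fin.succ) _ 2 (fun _ => rfl)
        (fun _ => by simp)]
    simp [tridiagS, Fin.ext_iff, Nat.dist]
  have h00 : tridiagS (k + 2) a b 0 0 = a := by simp [tridiagS]
  have h01 : tridiagS (k + 2) a b 0 1 = b := by simp [tridiagS, Nat.dist]
  have h0j (j : Fin k) : tridiagS (k + 2) a b 0 j.succ.succ = 0 := by
    simp [tridiagS, Fin.ext_iff, Nat.dist]
  rw [det_succ_row_zero, Fin.sum_univ_succ, Fin.sum_univ_succ, Fin.succ_zero_eq_one, minor,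
    Fin.succAbove_zero, tridiagS_submatrix_of_val_eq_add a b Fin.succ Fin.succ 1 (fun _ => rfl)
      (fun _ => rfl), h00, h01]
  simp only [h0j, mul_zero, zero_mul, Finset.sum_const_zero, Fin.val_zero, Fin.val_one, pow_zero,
    pow_one]
  ring

theorem det_tridiagS_submatrix_castSucc_succ (k : ℕ) :
    ((tridiagS (k + 1) a b).submatrix Fin.castSucc Fin.succ).det = b ^ k := by
  rw [det_of_isLowerTriangular]
  · simp [tridiagS, Fin.ext_iff, Nat.dist]
  · intro i j hij
    simp only [OrderDual.toDual_lt_toDual, Fin.lt_def] at hij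
    simp only [tridiagS, Fin.ext_iff, Nat.dist, submatrix_apply, of_apply, Fin.val_castSucc,
      Fin.val_succ]
    grind

theorem det_tridiagS_submatrix_succ_castSucc (k : ℕ) :
    ((tridiagS (k + 1) a b).submatrix Fin.succ Fin.castSucc).det = b ^ k := by
  rw [det_of_isUpperTriangular]
  · simp [tridiagS, Fin.ext_iff, Nat.dist]
  · intro i j hij
    simp only [id, Fin.lt_def] at hij
    simp only [tridiagS, Fin.ext_iff, Nat.dist, submatrix_apply, of_apply, Fin.val_castSucc,
      Fin.val_succ]
    grind

theorem det_tridiagS_updateRow_last_single_zero (k : ℕ) :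
    ((tridiagS (k + 1) a b).updateRow (Fin.last k) (Pi.single 0 1)).det = (-b) ^ k := by
  rw [det_updateRow_single_one, Fin.succAbove_last, Fin.succAbove_zero,
    det_tridiagS_submatrix_castSucc_succ, Fin.val_last, Fin.val_zero, add_zero, ← mul_pow,
    neg_one_mul]

theorem det_tridiagS_updateRow_zero_single_last (k : ℕ) :
    ((tridiagS (k + 1) a b).updateRow 0 (Pi.single (Fin.last k) 1)).det = (-b) ^ k := by
  rw [det_updateRow_single_one, Fin.succAbove_last, Fin.succAbove_zero,
    det_tridiagS_submatrix_succ_castSucc, Fin.val_last, Fin.val_zero, zero_add, ← mul_pow,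
    neg_one_mul]

theorem det_tridiagS_updateRow_zero_updateRow_last (k : ℕ) :
    (((tridiagS (k + 2) a b).updateRow 0 (Pi.single (Fin.last (k + 1)) 1)).updateRow
      (Fin.last (k + 1)) (Pi.single 0 1)).det = -(tridiagS k a b).det := by
  have hrow : ((tridiagS (k + 2) a b).updateRow 0 (Pi.single (Fin.last (k + 1)) 1)).submatrix
      Fin.castSucc Fin.succ =
        ((tridiagS (k + 2) a b).submatrix Fin.castSucc Fin.succ).updateRow 0
          (Pi.single (Fin.last k) 1) := by
    ext i j
    cases i using Fin.cases <;> simp [updateRow_apply, Pi.single_apply, Fin.ext_iff]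
  rw [det_updateRow_single_one, Fin.succAbove_last, Fin.succAbove_zero, hrow,
    det_updateRow_single_one, Fin.succAbove_last, Fin.succAbove_zero, submatrix_submatrix,
    tridiagS_submatrix_of_val_eq_add a b _ _ 1 (fun _ => rfl) (fun _ => rfl), Fin.val_last,
    Fin.val_last, Fin.val_zero, Fin.val_zero, add_zero, zero_add, pow_succ]
  have hsign : ((-1 : ℝ) ^ k) * (-1) ^ k = 1 := by rw [← mul_pow]; norm_num
  linear_combination -(tridiagS k a b).det * hsign

end tridiagS

theorem ringA_eq_updateRow_updateRow (k : ℕ) (φ : ℝ) :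
    ringA (k + 3) φ =
      ((tridiagS (k + 3) 2 (-φ)).updateRow (Fin.last (k + 2))
          (tridiagS (k + 3) 2 (-φ) (Fin.last (k + 2)) + (-φ) • Pi.single 0 1)).updateRow 0
        (tridiagS (k + 3) 2 (-φ) 0 + (-φ) • Pi.single (Fin.last (k + 2)) 1) := by
  ext i j
  simp only [ringA, tridiagS, updateRow_apply, Pi.single_apply, Pi.add_apply, Pi.smul_apply,
    smul_eq_mul, of_apply, Fin.ext_iff, Nat.dist, Fin.val_last, Fin.val_zero]
  grind

/-- Lemma E.1: recurrence for the determinant of the ring-graph CAR precision matrix. -/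
theorem det_ringA_recurrence (φ : ℝ) (n : ℕ) (hn : 3 ≤ n) :
    (ringA n φ).det =
      2 * (tridiagS (n - 1) 2 (-φ)).det -
        2 * φ ^ 2 * ((tridiagS (n - 2) 2 (-φ)).det + φ ^ (n - 2)) := by
  obtain ⟨k, rfl⟩ : ∃ k, n = k + 3 := ⟨n - 3, by omega⟩
  rw [show k + 3 - 1 = k + 2 by omega, show k + 3 - 2 = k + 1 by omega,
    ringA_eq_updateRow_updateRow, det_updateRow_add_smul_updateRow_add_smul _ Fin.last_pos.ne,
    det_tridiagS_updateRow_zero_single_last, det_tridiagS_updateRow_last_single_zero,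
    det_tridiagS_updateRow_zero_updateRow_last, det_tridiagS_succ_succ]
  ring
end

section
/- Let φ be a real number with |φ| < 1 and set s = √(1−φ²). Then for every integer n ≥ 3, det[A_n(φ)] = (1/s)·[(1+s)^n − (1−s)^n] − 2·[ (φ²/(2s))·((1+s)^{n−1} − (1−s)^{n−1}) + φ^n ]. -/
/-!
Expanding `det A_n` along the first row, and the two off-diagonal minors along their first
column, leaves determinants of path matrices `P_k` (the tridiagonal matrices with `2` on the
diagonal and `-φ` next to it) and of triangular matrices with diagonal `-φ`:
`det A_n = 2 det P_{n-1} - 2 φ² det P_{n-2} - 2 φⁿ`.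
The continuant recursion `det P_{k+2} = 2 det P_{k+1} - φ² det P_k` has characteristic roots
`1 ± s`, whence `2 s det P_k = (1 + s)^(k+1) - (1 - s)^(k+1)`.
-/

open Matrix

section CommRing

variable {R : Type*} [CommRing R]

theorem det_succ_succ_of_tridiagonal_head {m : ℕ} (M : Matrix (Fin (m + 2)) (Fin (m + 2)) R)
    (hrow : ∀ j : Fin m, M 0 j.succ.succ = 0) (hcol : ∀ i : Fin m, M i.succ.succ 0 = 0) :
    M.det = M 0 0 * (M.submatrix Fin.succ Fin.succ).det -
      M 0 1 * M 1 0 * ((M.submatrix Fin.succ Fin.succ).submatrix Fin.succ Fin.succ).det := by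
  have hminor : (M.submatrix Fin.succ (Fin.succAbove 1)).det =
      M 1 0 * ((M.submatrix Fin.succ Fin.succ).submatrix Fin.succ Fin.succ).det := by
    rw [det_succ_column_zero, Fin.sum_univ_succ]
    simp [hcol, submatrix_submatrix, Function.comp_def]
  rw [det_succ_row_zero, Fin.sum_univ_succ, Fin.sum_univ_succ]
  simp only [hrow, mul_zero, zero_mul, Finset.sum_const_zero, add_zero, Fin.succAbove_zero,
    Fin.succ_zero_eq_one, hminor, Fin.val_zero, Fin.val_one, pow_zero, pow_one]
  ring

theorem det_succ_column_zero_of_cyclic {m : ℕ} (M : Matrix (Fin (m + 2)) (Fin (m + 2)) R)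
    (hcol : ∀ i : Fin m, M i.castSucc.succ 0 = 0) :
    M.det = M 0 0 * (M.submatrix Fin.succ Fin.succ).det +
      (-1) ^ (m + 1) * M (Fin.last _) 0 * (M.submatrix Fin.castSucc Fin.succ).det := by
  rw [det_succ_column_zero, Fin.sum_univ_succ, Fin.sum_univ_castSucc]
  simp [hcol]

theorem det_succ_row_zero_of_cyclic {m : ℕ} (M : Matrix (Fin (m + 3)) (Fin (m + 3)) R)
    (hrow : ∀ j : Fin m, M 0 j.castSucc.succ.succ = 0) :
    M.det = M 0 0 * (M.submatrix Fin.succ Fin.succ).det -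
      M 0 1 * (M.submatrix Fin.succ (Fin.succAbove 1)).det +
      (-1) ^ m * M 0 (Fin.last _) * (M.submatrix Fin.succ Fin.castSucc).det := by
  rw [det_succ_row_zero, Fin.sum_univ_succ, Fin.sum_univ_succ, Fin.sum_univ_castSucc]
  simp only [hrow, mul_zero, zero_mul, Finset.sum_const_zero, zero_add, Fin.succAbove_zero,
    Fin.succ_zero_eq_one, Fin.succ_last, Fin.succAbove_last, Fin.val_zero, Fin.val_one,
    Fin.val_last, pow_zero, pow_succ]
  ring

def pathA (n : ℕ) (φ : R) : Matrix (Fin n) (Fin n) R :=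
  Matrix.of fun i j => if i = j then 2 else if Nat.dist i.val j.val = 1 then -φ else 0

theorem pathA_submatrix_succ (n : ℕ) (φ : R) :
    (pathA (n + 1) φ).submatrix Fin.succ Fin.succ = pathA n φ := by
  ext i j
  simp only [pathA, of_apply, submatrix_apply, Fin.ext_iff, Fin.val_succ, Nat.dist.eq_1]
  split_ifs <;> first | rfl | omega

theorem det_pathA_add_two (n : ℕ) (φ : R) :
    (pathA (n + 2) φ).det = 2 * (pathA (n + 1) φ).det - φ ^ 2 * (pathA n φ).det := by
  have hrow : ∀ j : Fin n, pathA (n + 2) φ 0 j.succ.succ = 0 := fun j => by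
    simp [pathA, Fin.ext_iff, Nat.dist]
  have hcol : ∀ i : Fin n, pathA (n + 2) φ i.succ.succ 0 = 0 := fun i => by
    simp [pathA, Fin.ext_iff, Nat.dist]
  have h00 : pathA (n + 2) φ 0 0 = 2 := by simp [pathA]
  have h01 : pathA (n + 2) φ 0 1 = -φ := by simp [pathA, Nat.dist]
  have h10 : pathA (n + 2) φ 1 0 = -φ := by simp [pathA, Nat.dist]
  rw [det_succ_succ_of_tridiagonal_head _ hrow hcol, pathA_submatrix_succ, pathA_submatrix_succ,
    h00, h01, h10]
  ring

theorem two_mul_mul_det_pathA {φ s : R} (hs : s ^ 2 = 1 - φ ^ 2) (n : ℕ) :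
    2 * s * (pathA n φ).det = (1 + s) ^ (n + 1) - (1 - s) ^ (n + 1) := by
  induction n using Nat.twoStepInduction with
  | zero =>
    rw [det_fin_zero]
    ring
  | one =>
    rw [det_fin_one]
    simp only [pathA, of_apply, if_true]
    ring
  | more n ih₀ ih₁ =>
    rw [det_pathA_add_two]
    linear_combination 2 * ih₁ - φ ^ 2 * ih₀ + ((1 - s) ^ (n + 1) - (1 + s) ^ (n + 1)) * hs

end CommRing

theorem transpose_ringA (n : ℕ) (φ : ℝ) : (ringA n φ)ᵀ = ringA n φ := by
  ext i j
  simp only [ringA, transpose_apply, of_apply, Fin.ext_iff, Nat.dist.eq_1]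
  split_ifs <;> first | rfl | omega

theorem ringA_apply_eq_zero {n : ℕ} (φ : ℝ) {i j : Fin n} (h₁ : 2 ≤ Nat.dist i j)
    (h₂ : Nat.dist i j + 2 ≤ n) : ringA n φ i j = 0 := by
  have hij : i ≠ j := by
    rintro rfl
    simp at h₁
  rw [ringA, of_apply, if_neg hij, if_neg (by omega)]

-- `1 ≤ k` keeps row and column `0`, hence the wrap-around entries, out of the submatrix.
theorem ringA_submatrix_eq_pathA {n p k : ℕ} (φ : ℝ) (hk : 1 ≤ k) {f g : Fin p → Fin n}
    (hf : ∀ i, (f i : ℕ) = i + k) (hg : ∀ j, (g j : ℕ) = j + k) :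
    (ringA n φ).submatrix f g = pathA p φ := by
  ext i j
  have := (g j).isLt
  have := hf i
  have := hg j
  simp only [ringA, pathA, of_apply, submatrix_apply, Fin.ext_iff, Nat.dist.eq_1]
  split_ifs <;> first | rfl | omega

theorem det_ringA_submatrix_eq_neg_pow {n p k : ℕ} (φ : ℝ) (hk : 1 ≤ k)
    {f g : Fin p → Fin n} (hf : ∀ i, (f i : ℕ) = i + k) (hg : ∀ j, (g j : ℕ) = j + k + 1) :
    ((ringA n φ).submatrix f g).det = (-φ) ^ p := by
  have hlower : ((ringA n φ).submatrix f g).IsLowerTriangular := by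
    intro i j hij
    have := (g j).isLt
    have := hf i
    have := hg j
    simp only [OrderDual.toDual_lt_toDual, Fin.lt_def] at hij
    simp only [ringA, of_apply, submatrix_apply, Fin.ext_iff, Nat.dist.eq_1]
    split_ifs <;> first | rfl | omega
  have hdiag : ∀ i, (ringA n φ).submatrix f g i i = -φ := by
    intro i
    have := (g i).isLt
    have := hf i
    have := hg i
    simp only [ringA, of_apply, submatrix_apply, Fin.ext_iff, Nat.dist.eq_1]
    split_ifs <;> first | rfl | omega
  rw [det_of_isLowerTriangular _ hlower, Finset.prod_congr rfl fun i _ => hdiag i]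
  simp

theorem ringA_succ_succ_zero (m : ℕ) (φ : ℝ) (j : Fin m) :
    ringA (m + 3) φ j.castSucc.succ.succ 0 = 0 := by
  have : Nat.dist j.castSucc.succ.succ (0 : Fin (m + 3)) = j + 2 := by simp [Nat.dist_zero_right]
  exact ringA_apply_eq_zero φ (by omega) (by omega)

theorem ringA_zero_succ_succ (m : ℕ) (φ : ℝ) (j : Fin m) :
    ringA (m + 3) φ 0 j.castSucc.succ.succ = 0 := by
  rw [← transpose_ringA, transpose_apply]
  exact ringA_succ_succ_zero m φ j

theorem det_ringA_submatrix_succ_succAbove_one (m : ℕ) (φ : ℝ) :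
    ((ringA (m + 3) φ).submatrix Fin.succ (Fin.succAbove 1)).det =
      -φ * (pathA (m + 1) φ).det + (-1) ^ (m + 1) * -φ * (-φ) ^ (m + 1) := by
  have h10 : ringA (m + 3) φ 1 0 = -φ := by simp [ringA, Nat.dist]
  have hl0 : ringA (m + 3) φ (Fin.last _) 0 = -φ := by simp [ringA, Nat.dist]
  rw [det_succ_column_zero_of_cyclic _ (ringA_succ_succ_zero m φ)]
  simp only [submatrix_submatrix, submatrix_apply, Fin.succ_zero_eq_one, Fin.one_succAbove_zero,
    Fin.succ_last, h10, hl0]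
  rw [ringA_submatrix_eq_pathA (k := 2) φ one_le_two (fun _ => rfl) (fun _ => by simp),
    det_ringA_submatrix_eq_neg_pow φ le_rfl (fun _ => rfl) (fun _ => by simp)]

theorem det_ringA_submatrix_succ_castSucc (m : ℕ) (φ : ℝ) :
    ((ringA (m + 3) φ).submatrix Fin.succ Fin.castSucc).det =
      -φ * (-φ) ^ (m + 1) + (-1) ^ (m + 1) * -φ * (pathA (m + 1) φ).det := by
  have h10 : ringA (m + 3) φ 1 0 = -φ := by simp [ringA, Nat.dist]
  have hl0 : ringA (m + 3) φ (Fin.last _) 0 = -φ := by simp [ringA, Nat.dist]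
  have hupper : ((ringA (m + 3) φ).submatrix (Fin.succ ∘ Fin.succ) (Fin.castSucc ∘ Fin.succ)).det =
      (-φ) ^ (m + 1) := by
    rw [← det_transpose, transpose_submatrix, transpose_ringA]
    exact det_ringA_submatrix_eq_neg_pow φ le_rfl (fun _ => rfl) (fun _ => rfl)
  rw [det_succ_column_zero_of_cyclic _ (ringA_succ_succ_zero m φ)]
  simp only [submatrix_submatrix, submatrix_apply, Fin.succ_zero_eq_one, Fin.castSucc_zero,
    Fin.succ_last, h10, hl0, hupper]
  rw [ringA_submatrix_eq_pathA φ le_rfl (fun _ => rfl) (fun _ => rfl)]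

theorem det_ringA_add_three (m : ℕ) (φ : ℝ) :
    (ringA (m + 3) φ).det =
      2 * (pathA (m + 2) φ).det - 2 * φ ^ 2 * (pathA (m + 1) φ).det - 2 * φ ^ (m + 3) := by
  have h00 : ringA (m + 3) φ 0 0 = 2 := by simp [ringA]
  have h01 : ringA (m + 3) φ 0 1 = -φ := by simp [ringA, Nat.dist]
  have h0l : ringA (m + 3) φ 0 (Fin.last _) = -φ := by simp [ringA, Nat.dist]
  have hsign : ((-1 : ℝ) ^ m) ^ 2 = 1 := by rw [← pow_mul, pow_mul', neg_one_sq, one_pow]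
  rw [det_succ_row_zero_of_cyclic _ (ringA_zero_succ_succ m φ),
    ringA_submatrix_eq_pathA φ le_rfl (fun _ => rfl) (fun _ => rfl),
    det_ringA_submatrix_succ_succAbove_one, det_ringA_submatrix_succ_castSucc, h00, h01, h0l,
    neg_pow φ, pow_succ (-1 : ℝ) m]
  linear_combination (-φ ^ 2 * (pathA (m + 1) φ).det - 2 * φ ^ (m + 3)) * hsign

/-- Theorem E.3: closed form of the determinant of the ring-graph CAR precision matrix,
for `|φ| < 1` and `s = √(1-φ²)`. -/
theorem det_ringA_closed_form (φ : ℝ) (hφ : |φ| < 1) (n : ℕ) (hn : 3 ≤ n) :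
    (ringA n φ).det =
      (1 / Real.sqrt (1 - φ ^ 2)) *
          ((1 + Real.sqrt (1 - φ ^ 2)) ^ n - (1 - Real.sqrt (1 - φ ^ 2)) ^ n) -
        2 * ((φ ^ 2 / (2 * Real.sqrt (1 - φ ^ 2))) *
            ((1 + Real.sqrt (1 - φ ^ 2)) ^ (n - 1) - (1 - Real.sqrt (1 - φ ^ 2)) ^ (n - 1)) +
          φ ^ n) := by
  obtain ⟨m, rfl⟩ := Nat.exists_eq_add_of_le' hn
  have hpos : 0 < 1 - φ ^ 2 := sub_pos.2 ((sq_lt_one_iff_abs_lt_one φ).2 hφ)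
  set s := Real.sqrt (1 - φ ^ 2)
  have hs : s ^ 2 = 1 - φ ^ 2 := Real.sq_sqrt hpos.le
  have hs₀ : s ≠ 0 := (Real.sqrt_pos.2 hpos).ne'
  have h₁ := two_mul_mul_det_pathA hs (m + 1)
  have h₂ := two_mul_mul_det_pathA hs (m + 2)
  rw [det_ringA_add_three, show m + 3 - 1 = m + 2 from rfl]
  field_simp
  linear_combination h₂ - φ ^ 2 * h₁
end

section
/- Let n ≥ 1, let G and H be n×n real symmetric positive definite matrices, let ρ be a real number, and let Q be the n×n diagonal matrix with diagonal entries Q_{ii} = −ρ·√(G_{ii}·H_{ii}). Suppose there is a real number m > 0 such that vᵀGv ≥ m·vᵀv and vᵀHv ≥ m·vᵀv for every v ∈ ℝⁿ, and such that ρ²·G_{ii}·H_{ii} < m² for every i. Then the 2n×2n block matrix P = [[G, Q], [Qᵀ, H]] is positive definite. -/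
/-!
Write a vector of `ℝⁿ ⊕ ℝⁿ` as `(u, v)`. The quadratic form of `P` is
`uᵀGu + vᵀHv + 2 ∑ᵢ Qᵢᵢ uᵢ vᵢ`, and `2 |Qᵢᵢ uᵢ vᵢ| ≤ |Qᵢᵢ| (uᵢ² + vᵢ²)` by AM-GM, so it is at least
`∑ᵢ (m - |Qᵢᵢ|) (uᵢ² + vᵢ²)`. The hypothesis on `ρ` says exactly `|Qᵢᵢ| < m`, so this lower bound
is positive for `(u, v) ≠ 0`.
-/

open Matrix

theorem sum_pos_of_sumElim_ne_zero {ι : Type*} [Fintype ι] {w u v : ι → ℝ} (hw : ∀ i, 0 < w i)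
    (huv : Sum.elim u v ≠ 0) : 0 < ∑ i, w i * (u i ^ 2 + v i ^ 2) := by
  obtain ⟨j, hj⟩ := Function.ne_iff.mp huv
  refine Finset.sum_pos' (fun i _ => mul_nonneg (hw i).le (by positivity)) ?_
  cases j with
  | inl i =>
    have hu : u i ≠ 0 := hj
    exact ⟨i, Finset.mem_univ _, mul_pos (hw i) (by positivity)⟩
  | inr i =>
    have hv : v i ≠ 0 := hj
    exact ⟨i, Finset.mem_univ _, mul_pos (hw i) (by positivity)⟩

namespace Matrix

theorem sumElim_dotProduct_fromBlocks_transpose_mulVec {ι κ R : Type*} [Fintype ι] [Fintype κ]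
    [CommSemiring R] (A : Matrix ι ι R) (B : Matrix κ κ R) (C : Matrix ι κ R)
    (u : ι → R) (v : κ → R) :
    Sum.elim u v ⬝ᵥ (fromBlocks A C Cᵀ B *ᵥ Sum.elim u v) =
      u ⬝ᵥ (A *ᵥ u) + 2 * (u ⬝ᵥ (C *ᵥ v)) + v ⬝ᵥ (B *ᵥ v) := by
  have hsymm : v ⬝ᵥ (Cᵀ *ᵥ u) = u ⬝ᵥ (C *ᵥ v) := by
    rw [dotProduct_mulVec, vecMul_transpose, dotProduct_comm]
  simp only [fromBlocks_mulVec, Sum.elim_comp_inl, Sum.elim_comp_inr, sumElim_dotProduct_sumElim,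
    dotProduct_add, hsymm]
  ring

variable {ι : Type*} [Fintype ι] [DecidableEq ι]

theorem neg_sum_abs_mul_le_two_mul_dotProduct_diagonal_mulVec (d u v : ι → ℝ) :
    -∑ i, |d i| * (u i ^ 2 + v i ^ 2) ≤ 2 * (u ⬝ᵥ (diagonal d *ᵥ v)) := by
  simp only [mulVec_diagonal, dotProduct, Finset.mul_sum, ← Finset.sum_neg_distrib]
  refine Finset.sum_le_sum fun i _ => ?_
  have hamgm : 2 * |u i * v i| ≤ u i ^ 2 + v i ^ 2 := by
    rw [abs_mul]
    nlinarith [sq_nonneg (|u i| - |v i|), sq_abs (u i), sq_abs (v i)]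
  have hcross : |2 * (u i * (d i * v i))| ≤ |d i| * (u i ^ 2 + v i ^ 2) := by
    calc |2 * (u i * (d i * v i))| = |d i| * (2 * |u i * v i|) := by
          rw [abs_mul, abs_two, mul_left_comm, abs_mul]; ring
      _ ≤ |d i| * (u i ^ 2 + v i ^ 2) := by gcongr
  linarith [neg_abs_le (2 * (u i * (d i * v i)))]

theorem posDef_fromBlocks_diagonal_of_abs_lt {A B : Matrix ι ι ℝ} (hA : A.IsHermitian)
    (hB : B.IsHermitian) {d : ι → ℝ} {m : ℝ}
    (hAm : ∀ u : ι → ℝ, m * (u ⬝ᵥ u) ≤ u ⬝ᵥ (A *ᵥ u))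
    (hBm : ∀ v : ι → ℝ, m * (v ⬝ᵥ v) ≤ v ⬝ᵥ (B *ᵥ v)) (hd : ∀ i, |d i| < m) :
    (fromBlocks A (diagonal d) (diagonal d)ᵀ B).PosDef := by
  refine posDef_iff_dotProduct_mulVec.mpr
    ⟨hA.fromBlocks (conjTranspose_eq_transpose_of_trivial _) hB, fun x hx => ?_⟩
  rw [← Sum.elim_comp_inl_inr x] at hx ⊢
  set u := x ∘ Sum.inl
  set v := x ∘ Sum.inr
  have hsplit : m * (u ⬝ᵥ u) + m * (v ⬝ᵥ v) - ∑ i, |d i| * (u i ^ 2 + v i ^ 2) =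
      ∑ i, (m - |d i|) * (u i ^ 2 + v i ^ 2) := by
    simp only [dotProduct, Finset.mul_sum, ← Finset.sum_add_distrib, ← Finset.sum_sub_distrib]
    exact Finset.sum_congr rfl fun i _ => by ring
  have hpos := sum_pos_of_sumElim_ne_zero (fun i => sub_pos.mpr (hd i)) hx
  rw [star_trivial, sumElim_dotProduct_fromBlocks_transpose_mulVec]
  linarith [hAm u, hBm v, neg_sum_abs_mul_le_two_mul_dotProduct_diagonal_mulVec d u v]

end Matrix

theorem joint_precision_posDef_general (n : ℕ)
    (G H : Matrix (Fin n) (Fin n) ℝ) (hG : G.PosDef) (hH : H.PosDef)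
    (ρ m : ℝ) (hm : 0 < m)
    (hGm : ∀ v : Fin n → ℝ, m * (v ⬝ᵥ v) ≤ v ⬝ᵥ (G *ᵥ v))
    (hHm : ∀ v : Fin n → ℝ, m * (v ⬝ᵥ v) ≤ v ⬝ᵥ (H *ᵥ v))
    (hρ : ∀ i : Fin n, ρ ^ 2 * (G i i * H i i) < m ^ 2) :
    (Matrix.fromBlocks G
      (Matrix.diagonal fun i => -ρ * Real.sqrt (G i i * H i i))
      (Matrix.diagonal fun i => -ρ * Real.sqrt (G i i * H i i))ᵀ
      H).PosDef := by
  refine posDef_fromBlocks_diagonal_of_abs_lt hG.isHermitian hH.isHermitian hGm hHm fun i => ?_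
  have hGH : 0 ≤ G i i * H i i := (mul_pos hG.diag_pos hH.diag_pos).le
  refine abs_lt_of_sq_lt_sq ?_ hm.le
  rw [mul_pow, neg_sq, Real.sq_sqrt hGH]
  exact hρ i

/-- Appendix D.2: the joint precision matrix `P = [[G, Q], [Qᵀ, H]]` of `(U, Z)`, with
diagonal cross-precision `Q_{ii} = -ρ √(G_{ii} H_{ii})`, is positive definite whenever
`m` is a positive common lower bound on the quadratic forms of `G` and `H` and
`ρ² G_{ii} H_{ii} < m²` for every `i`. -/
theorem joint_precision_posDef (n : ℕ) (hn : 1 ≤ n)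
    (G H : Matrix (Fin n) (Fin n) ℝ) (hG : G.PosDef) (hH : H.PosDef)
    (ρ m : ℝ) (hm : 0 < m)
    (hGm : ∀ v : Fin n → ℝ, m * (v ⬝ᵥ v) ≤ v ⬝ᵥ (G *ᵥ v))
    (hHm : ∀ v : Fin n → ℝ, m * (v ⬝ᵥ v) ≤ v ⬝ᵥ (H *ᵥ v))
    (hρ : ∀ i : Fin n, ρ ^ 2 * (G i i * H i i) < m ^ 2) :
    (Matrix.fromBlocks G
      (Matrix.diagonal fun i => -ρ * Real.sqrt (G i i * H i i))
      (Matrix.diagonal fun i => -ρ * Real.sqrt (G i i * H i i))ᵀ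
      H).PosDef :=
  joint_precision_posDef_general n G H hG hH ρ m hm hGm hHm hρ
end

section
/- Let n > p ≥ 1 be integers, let X be an n×p real matrix such that XᵀX is invertible, let Z be the k-th column of X for some k ∈ {1,…,p}, and let Y ∈ ℝⁿ. Let τ_U, τ_ε, τ_Z > 0 and ρ ∈ (−1, 1), and set σ² = τ_U⁻¹ + τ_ε⁻¹, φ = τ_Z·(1−ρ²), V = σ²·I_n, A = φ⁻¹·I_n, and B = ρ·√(τ_Z/τ_U)·I_n. Define F = −(1/2)·log( det(V)·det(A)·det(XᵀV⁻¹X) ) − (1/2)·[ (Y − B·Z)ᵀ·( V⁻¹ − V⁻¹X(XᵀV⁻¹X)⁻¹XᵀV⁻¹ )·(Y − B·Z) + Zᵀ·A⁻¹·Z ]. Then F = −(1/2)·log det(XᵀX) − ((n−p)/2)·log σ² + (n/2)·log φ − (1/2)·σ⁻²·Yᵀ·(I_n − X(XᵀX)⁻¹Xᵀ)·Y − (1/2)·φ·ZᵀZ. In particular, F depends on (τ_U, τ_ε, τ_Z, ρ) only through (σ², φ) = (τ_U⁻¹ + τ_ε⁻¹, τ_Z·(1−ρ²)). -/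
/-!
For scalar `V = σ² I` the REML projection `V⁻¹ - V⁻¹ X (Xᵀ V⁻¹ X)⁻¹ Xᵀ V⁻¹` collapses to
`σ⁻² (I - H)`, where `H = X (Xᵀ X)⁻¹ Xᵀ` is the hat matrix. Since `Z` is a column of `X`, the
symmetric matrix `I - H` annihilates the confounding shift `B Z = c Z`, so the shift drops out of
the quadratic form; all determinants are powers of `σ²` and `φ` times `det (Xᵀ X)`.
-/

open Matrix

namespace Matrix

section CommRing

variable {m n R : Type*} [Fintype m] [CommRing R]

theorem sub_dotProduct_mulVec_sub_of_mulVec_eq_zero {M : Matrix m m R} (hM : M.IsSymm)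
    {w : m → R} (hw : M *ᵥ w = 0) (y : m → R) :
    (y - w) ⬝ᵥ (M *ᵥ (y - w)) = y ⬝ᵥ (M *ᵥ y) := by
  have hwM : w ⬝ᵥ (M *ᵥ y) = 0 := by
    rw [dotProduct_mulVec, ← mulVec_transpose, hM.eq, hw, zero_dotProduct]
  rw [mulVec_sub, hw, sub_zero, sub_dotProduct, hwM, sub_zero]

variable [Fintype n] [DecidableEq n]

noncomputable def hatMatrix (X : Matrix m n R) : Matrix m m R := X * (Xᵀ * X)⁻¹ * Xᵀ

theorem isSymm_hatMatrix (X : Matrix m n R) : (hatMatrix X).IsSymm := by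
  rw [IsSymm, hatMatrix, transpose_mul, transpose_mul, transpose_transpose, transpose_nonsing_inv,
    transpose_mul, transpose_transpose, Matrix.mul_assoc]

theorem hatMatrix_mul {X : Matrix m n R} (hX : IsUnit (Xᵀ * X)) : hatMatrix X * X = X := by
  rw [hatMatrix, Matrix.mul_assoc, Matrix.mul_assoc,
    nonsing_inv_mul _ ((isUnit_iff_isUnit_det _).mp hX), Matrix.mul_one]

variable [DecidableEq m]

theorem one_sub_hatMatrix_mulVec_mulVec {X : Matrix m n R} (hX : IsUnit (Xᵀ * X)) (v : n → R) :
    (1 - hatMatrix X) *ᵥ (X *ᵥ v) = 0 := by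
  rw [mulVec_mulVec, Matrix.sub_mul, hatMatrix_mul hX, Matrix.one_mul, sub_self, zero_mulVec]

noncomputable def remlProjection (V : Matrix m m R) (X : Matrix m n R) : Matrix m m R :=
  V⁻¹ - V⁻¹ * X * (Xᵀ * V⁻¹ * X)⁻¹ * Xᵀ * V⁻¹

end CommRing

section Field

variable {m n K : Type*} [Fintype m] [Fintype n] [DecidableEq m] [DecidableEq n] [Field K]

theorem inv_smul₀ (a : K) (A : Matrix n n K) : (a • A)⁻¹ = a⁻¹ • A⁻¹ := by
  rcases eq_or_ne a 0 with rfl | ha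
  · simp
  by_cases hA : IsUnit A.det
  · exact inv_smul' A (Units.mk0 a ha) hA
  · have hsA : ¬IsUnit (a • A).det := by
      rwa [det_smul, IsUnit.mul_iff, and_iff_right (isUnit_iff_ne_zero.mpr (pow_ne_zero _ ha))]
    rw [nonsing_inv_apply_not_isUnit _ hA, nonsing_inv_apply_not_isUnit _ hsA, smul_zero]

theorem inv_smul_one (a : K) : (a • (1 : Matrix n n K))⁻¹ = a⁻¹ • 1 := by
  rw [inv_smul₀, inv_one]

omit [Fintype n] [DecidableEq n] in
theorem transpose_mul_smul_one_mul (a : K) (X : Matrix m n K) :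
    Xᵀ * (a • (1 : Matrix m m K)) * X = a • (Xᵀ * X) := by
  rw [Matrix.mul_smul, Matrix.mul_one, Matrix.smul_mul]

theorem remlProjection_smul_one {a : K} (ha : a ≠ 0) (X : Matrix m n K) :
    remlProjection (a • 1) X = a⁻¹ • (1 - hatMatrix X) := by
  rw [remlProjection, inv_smul_one, transpose_mul_smul_one_mul, inv_smul₀, inv_inv, hatMatrix]
  simp only [Matrix.smul_mul, Matrix.mul_smul, Matrix.one_mul, Matrix.mul_one, smul_smul, smul_sub]
  rw [mul_inv_cancel₀ ha, mul_one]

end Field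

end Matrix

theorem nonspatial_restricted_likelihood_general (n p : ℕ)
    (X : Matrix (Fin n) (Fin p) ℝ) (hX : IsUnit (Xᵀ * X))
    (k : Fin p) (Y : Fin n → ℝ)
    (τU τε τZ ρ : ℝ) (hτU : 0 < τU) (hτε : 0 < τε) (hτZ : 0 < τZ)
    (hρ : ρ ∈ Set.Ioo (-1 : ℝ) 1) :
    let Z : Fin n → ℝ := fun i => X i k
    let σ2 : ℝ := τU⁻¹ + τε⁻¹
    let φ : ℝ := τZ * (1 - ρ ^ 2)
    let V : Matrix (Fin n) (Fin n) ℝ := σ2 • 1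
    let A : Matrix (Fin n) (Fin n) ℝ := φ⁻¹ • 1
    let B : Matrix (Fin n) (Fin n) ℝ := (ρ * Real.sqrt (τZ / τU)) • 1;
    (-(1 / 2) * Real.log (V.det * A.det * (Xᵀ * V⁻¹ * X).det) -
        (1 / 2) * (((Y - B *ᵥ Z) ⬝ᵥ
            ((V⁻¹ - V⁻¹ * X * (Xᵀ * V⁻¹ * X)⁻¹ * Xᵀ * V⁻¹) *ᵥ (Y - B *ᵥ Z))) +
          Z ⬝ᵥ (A⁻¹ *ᵥ Z))) =
      (-(1 / 2) * Real.log (Xᵀ * X).det -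
        ((n : ℝ) - (p : ℝ)) / 2 * Real.log σ2 +
        (n : ℝ) / 2 * Real.log φ -
        (1 / 2) * σ2⁻¹ * (Y ⬝ᵥ ((1 - X * (Xᵀ * X)⁻¹ * Xᵀ) *ᵥ Y)) -
        (1 / 2) * φ * (Z ⬝ᵥ Z)) := by
  intro Z σ2 φ V A B
  have hσ2 : σ2 ≠ 0 := (add_pos (inv_pos.mpr hτU) (inv_pos.mpr hτε)).ne'
  have hφ : φ ≠ 0 :=
    (mul_pos hτZ (sub_pos.mpr ((sq_lt_one_iff_abs_lt_one ρ).mpr (abs_lt.mpr hρ)))).ne'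
  have hdet : (Xᵀ * X).det ≠ 0 := ((isUnit_iff_isUnit_det _).mp hX).ne_zero
  have hBZ : B *ᵥ Z = X *ᵥ ((ρ * Real.sqrt (τZ / τU)) • Pi.single k 1) := by
    rw [mulVec_smul, mulVec_single_one, smul_mulVec, one_mulVec]
    rfl
  rw [hBZ, ← remlProjection, remlProjection_smul_one hσ2, smul_mulVec, dotProduct_smul,
    sub_dotProduct_mulVec_sub_of_mulVec_eq_zero (isSymm_one.sub (isSymm_hatMatrix X))
      (one_sub_hatMatrix_mulVec_mulVec hX _)]
  simp only [V, A, inv_smul_one, inv_inv, transpose_mul_smul_one_mul, det_smul, det_one,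
    Fintype.card_fin, mul_one, smul_mulVec, one_mulVec, dotProduct_smul, smul_eq_mul]
  rw [Real.log_mul (by positivity) (by positivity), Real.log_mul (by positivity) hdet,
    Real.log_mul (by positivity) (by positivity), Real.log_pow, Real.log_pow, Real.log_pow,
    Real.log_inv, Real.log_inv, hatMatrix]
  ring

/-- Lack-of-identifiability in the non-spatial case: when the precision matrices of the
unmeasured confounder `U`, exposure `Z`, and noise `ε` are scalar, the log restricted
likelihood depends on `(τ_U, τ_ε, τ_Z, ρ)` only through `σ² = τ_U⁻¹ + τ_ε⁻¹` and
`φ = τ_Z (1 - ρ²)`. -/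
theorem nonspatial_restricted_likelihood (n p : ℕ) (hp : 1 ≤ p) (hnp : p < n)
    (X : Matrix (Fin n) (Fin p) ℝ) (hX : IsUnit (Xᵀ * X))
    (k : Fin p) (Y : Fin n → ℝ)
    (τU τε τZ ρ : ℝ) (hτU : 0 < τU) (hτε : 0 < τε) (hτZ : 0 < τZ)
    (hρ : ρ ∈ Set.Ioo (-1 : ℝ) 1) :
    let Z : Fin n → ℝ := fun i => X i k
    let σ2 : ℝ := τU⁻¹ + τε⁻¹
    let φ : ℝ := τZ * (1 - ρ ^ 2)
    let V : Matrix (Fin n) (Fin n) ℝ := σ2 • 1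
    let A : Matrix (Fin n) (Fin n) ℝ := φ⁻¹ • 1
    let B : Matrix (Fin n) (Fin n) ℝ := (ρ * Real.sqrt (τZ / τU)) • 1;
    (-(1 / 2) * Real.log (V.det * A.det * (Xᵀ * V⁻¹ * X).det) -
        (1 / 2) * (((Y - B *ᵥ Z) ⬝ᵥ
            ((V⁻¹ - V⁻¹ * X * (Xᵀ * V⁻¹ * X)⁻¹ * Xᵀ * V⁻¹) *ᵥ (Y - B *ᵥ Z))) +
          Z ⬝ᵥ (A⁻¹ *ᵥ Z))) =
      (-(1 / 2) * Real.log (Xᵀ * X).det -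
        ((n : ℝ) - (p : ℝ)) / 2 * Real.log σ2 +
        (n : ℝ) / 2 * Real.log φ -
        (1 / 2) * σ2⁻¹ * (Y ⬝ᵥ ((1 - X * (Xᵀ * X)⁻¹ * Xᵀ) *ᵥ Y)) -
        (1 / 2) * φ * (Z ⬝ᵥ Z)) :=
  nonspatial_restricted_likelihood_general n p X hX k Y τU τε τZ ρ hτU hτε hτZ hρ
end
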